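/- For all n ≥ 0, J(n+1) = sum over k from 0 to n of [ sum over b from max(0, ⌈k − n/2⌉) to ⌊k/2⌋ of binom(n−k+b, k−b)·binom(k−b, b) ], where J is the Jacobsthal sequence (inner sums with empty range equal 0). -/
import Mathlib


def J : ℕ → ℕ
  | 0 => 0
  | 1 => 1
  | n + 2 => J (n + 1) + 2 * J n

open Finset in
private def G (n : ℕ) : ℕ := ∑ d ∈ Finset.range (n + 1), Nat.choose (n - d) d * 2 ^ d

open Finset in
private lemma G_succ_succ (n : ℕ) : G (n + 2) = G (n + 1) + 2 * G n := by
  have h2 : G (n + 2) = 1 + (2 * G n + ∑ e ∈ range (n + 1), (n - e).choose (e + 1) * 2 ^ (e + 1)) := by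
    unfold G
    rw [Finset.sum_range_succ' (fun d => (n + 2 - d).choose d * 2 ^ d)]
    have : ∀ e ∈ range (n + 2), (n + 2 - (e + 1)).choose (e + 1) * 2 ^ (e + 1)
        = (if e ≤ n then ((n - e).choose e + (n - e).choose (e + 1)) * 2 ^ (e + 1) else 0) := by
      intro e he
      by_cases h : e ≤ n
      · have : n + 2 - (e + 1) = (n - e) + 1 := by omega
        rw [this, Nat.choose_succ_succ, if_pos h]
      · have he' : e = n + 1 := by simp at he; omega
        subst he'
        simp [Nat.choose_eq_zero_of_lt]
    rw [Finset.sum_congr rfl this, Finset.sum_range_succ]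
    simp only [le_refl, Nat.lt_irrefl, if_neg (by omega : ¬ (n + 1 ≤ n)), add_zero]
    have : ∀ e ∈ range (n + 1), (if e ≤ n then ((n - e).choose e + (n - e).choose (e + 1)) * 2 ^ (e + 1) else 0)
        = 2 * ((n - e).choose e * 2 ^ e) + (n - e).choose (e + 1) * 2 ^ (e + 1) := by
      intro e he
      simp only [mem_range] at he
      rw [if_pos (by omega)]
      ring
    rw [Finset.sum_congr rfl this, Finset.sum_add_distrib, ← Finset.mul_sum]
    rw [Nat.sub_zero, Nat.choose_zero_right]
    omega
  have h1 : G (n + 1) = 1 + ∑ e ∈ range (n + 1), (n - e).choose (e + 1) * 2 ^ (e + 1) := by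
    unfold G
    rw [Finset.sum_range_succ' (fun d => (n + 1 - d).choose d * 2 ^ d)]
    simp only [Nat.add_sub_cancel, Nat.choose_zero_right, pow_zero, mul_one]
    have : ∀ e, n + 1 - (e + 1) = n - e := by omega
    simp only [this]
    ring
  omega

private lemma J_eq_G (n : ℕ) : J (n + 1) = G n := by
  induction n using Nat.twoStepInduction with
  | zero => simp [J, G]
  | one => simp [J, G, Finset.sum_range_succ]
  | more n ih1 ih2 =>
    rw [G_succ_succ, ← ih1, ← ih2]
    show J (n + 1 + 2) = _
    rw [J]

open Finset in
theorem stmt18 (n : ℕ) :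
    J (n + 1) = ∑ k ∈ Finset.range (n + 1),
      ∑ b ∈ Finset.Icc (k - n / 2) (k / 2),
        Nat.choose (n - k + b) (k - b) * Nat.choose (k - b) b := by
  rw [J_eq_G]
  have hG : G n = ∑ d ∈ range (n / 2 + 1), (n - d).choose d * 2 ^ d := by
    unfold G
    rw [← Finset.sum_subset (Finset.range_subset_range.mpr (by omega : n / 2 + 1 ≤ n + 1))]
    intro d hd hnd
    simp only [mem_range] at hd hnd
    have : n - d < d := by omega
    simp [Nat.choose_eq_zero_of_lt this]
  rw [hG]
  have h2 : ∀ d : ℕ, (2 : ℕ) ^ d = ∑ b ∈ range (d + 1), d.choose b := by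
    intro d; rw [Nat.sum_range_choose]
  simp only [h2, Finset.mul_sum]
  rw [Finset.sum_sigma', Finset.sum_sigma']
  apply Finset.sum_nbij' (fun p => ⟨p.1 + p.2, p.2⟩) (fun p => ⟨p.1 - p.2, p.2⟩)
  · rintro ⟨d, b⟩ h
    simp only [mem_sigma, mem_range, Finset.mem_Icc] at h ⊢
    omega
  · rintro ⟨k, b⟩ h
    simp only [mem_sigma, mem_range, Finset.mem_Icc] at h ⊢
    constructor
    · omega
    · rcases h with ⟨hk, hb1, hb2⟩
      have : 2 * b ≤ k := by
        have := Nat.div_mul_le_self k 2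
        omega
      omega
  · rintro ⟨d, b⟩ h
    simp only [mem_sigma, mem_range] at h
    simp
  · rintro ⟨k, b⟩ h
    simp only [mem_sigma, mem_range, Finset.mem_Icc] at h
    have : 2 * b ≤ k := by
      have := Nat.div_mul_le_self k 2
      omega
    simp only [Sigma.mk.inj_iff, heq_eq_eq]
    exact ⟨by omega, trivial⟩
  · rintro ⟨d, b⟩ h
    simp only [mem_sigma, mem_range] at h
    have h1 : n - (d + b) + b = n - d := by omega
    have h2 : d + b - b = d := by omega
    rw [h1, h2]
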